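/- Assume F has bounded variation along x̄ uniformly over A, with δ̄ > 0 such that η^{δ̄}(T) < +∞, and assume hypotheses (C1) and (C2). Take δ ∈ (0, δ̄). Then there exists a countable set 𝒜 ⊂ (S,T) such that for every t ∈ (S,T) \ 𝒜, lim_{t'→t} sup{ d_H(F(t',x,a), F(t,x,a)) : x ∈ x̄(t) + δB, a ∈ A } = 0; that is, t ↦ F(t,·,·) is continuous at t in Hausdorff distance, uniformly over x in the δ-ball about x̄(t) and a ∈ A. -/

import Mathlib

open Set Metric Filter MeasureTheory
open scoped ENNReal Topology Classical

noncomputable section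

/-- Euclidean space `ℝ^n`. -/
abbrev Eucl (n : ℕ) : Type := EuclideanSpace ℝ (Fin n)

/-- A (strict) partition `a = τ 0 < τ 1 < ⋯ < τ N = b` of the interval `[a,b]`. -/
def IsPartition (a b : ℝ) (N : ℕ) (τ : ℕ → ℝ) : Prop :=
  0 < N ∧ τ 0 = a ∧ τ N = b ∧ ∀ i < N, τ i < τ (i + 1)

/-- The mesh (diameter) of the partition `τ` is at most `ε`. -/
def MeshLE (N : ℕ) (τ : ℕ → ℝ) (ε : ℝ) : Prop :=
  ∀ i < N, τ (i + 1) - τ i ≤ ε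

/-- The tube `x̄([s,t]) + δ B` around the arc `x̄` on `[s,t]`. -/
def tube {n : ℕ} (xbar : ℝ → Eucl n) (s t δ : ℝ) : Set (Eucl n) :=
  {y | ∃ r ∈ Icc s t, dist y (xbar r) ≤ δ}

/-- `I^δ(𝒯) = Σᵢ sup { d_H (F(t_{i+1},x,a), F(t_i,x,a)) : x ∈ x̄([t_i,t_{i+1}]) + δB, a ∈ A }`. -/
def variSum {n k : ℕ} (F : ℝ → Eucl n → Eucl k → Set (Eucl n)) (xbar : ℝ → Eucl n)
    (A : Set (Eucl k)) (δ : ℝ) (N : ℕ) (τ : ℕ → ℝ) : ℝ≥0∞ :=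
  ∑ i ∈ Finset.range N,
    ⨆ x ∈ tube xbar (τ i) (τ (i + 1)) δ, ⨆ a ∈ A,
      EMetric.hausdorffEdist (F (τ (i + 1)) x a) (F (τ i) x a)

/-- `η^δ_ε(t)`: the `(δ,ε)`-perturbed cumulative variation of `F` along `x̄`, uniformly
over `A`, on the base interval `[S,t]`.  (For `t = S` there are no partitions and the
supremum is `0`.) -/
def etaE {n k : ℕ} (F : ℝ → Eucl n → Eucl k → Set (Eucl n)) (xbar : ℝ → Eucl n)
    (A : Set (Eucl k)) (S δ ε t : ℝ) : ℝ≥0∞ :=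
  ⨆ (N : ℕ) (τ : ℕ → ℝ) (_ : IsPartition S t N τ) (_ : MeshLE N τ ε),
    variSum F xbar A δ N τ

/-- `η^δ(t) = lim_{ε ↓ 0} η^δ_ε(t)` (the limit of a monotone family: the infimum). -/
def etaD {n k : ℕ} (F : ℝ → Eucl n → Eucl k → Set (Eucl n)) (xbar : ℝ → Eucl n)
    (A : Set (Eucl k)) (S δ t : ℝ) : ℝ≥0∞ :=
  ⨅ (ε : ℝ) (_ : 0 < ε), etaE F xbar A S δ ε t

/-- `η(t) = lim_{δ ↓ 0} η^δ(t)`: the cumulative variation function of `F` along `x̄`,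
uniformly over `A`. -/
def eta {n k : ℕ} (F : ℝ → Eucl n → Eucl k → Set (Eucl n)) (xbar : ℝ → Eucl n)
    (A : Set (Eucl k)) (S t : ℝ) : ℝ≥0∞ :=
  ⨅ (δ : ℝ) (_ : 0 < δ), etaD F xbar A S δ t

/-- Hypothesis (C1): nonempty closed values, measurability in `t`, and uniform
boundedness `F(t,x,a) ⊆ cB` near the arc. -/
def HypC1 {n k : ℕ} (F : ℝ → Eucl n → Eucl k → Set (Eucl n)) (xbar : ℝ → Eucl n)
    (A : Set (Eucl k)) (S T δbar : ℝ) : Prop :=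
  (∀ t x a, (F t x a).Nonempty ∧ IsClosed (F t x a)) ∧
  (∀ (x : Eucl n) (a : Eucl k), ∀ U : Set (Eucl n), IsOpen U →
     MeasurableSet {t | t ∈ Icc S T ∧ (F t x a ∩ U).Nonempty}) ∧
  (∃ c > (0 : ℝ), ∀ t ∈ Icc S T, ∀ a ∈ A, ∀ x : Eucl n, dist x (xbar t) ≤ δbar →
     F t x a ⊆ closedBall 0 c)

/-- Hypothesis (C2): `F(t,x,a) ⊆ F(t,x',a') + γ(|x-x'| + |a-a'|)B` near the arc, where
`γ` is a modulus of continuity. -/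
def HypC2 {n k : ℕ} (F : ℝ → Eucl n → Eucl k → Set (Eucl n)) (xbar : ℝ → Eucl n)
    (A : Set (Eucl k)) (S T δbar : ℝ) (γ : ℝ → ℝ) : Prop :=
  ContinuousOn γ (Ici 0) ∧ MonotoneOn γ (Ici 0) ∧ γ 0 = 0 ∧ (∀ r ≥ (0 : ℝ), 0 ≤ γ r) ∧
  ∀ t ∈ Icc S T, ∀ x x' : Eucl n, ∀ a ∈ A, ∀ a' ∈ A,
    dist x (xbar t) ≤ δbar → dist x' (xbar t) ≤ δbar →
    ∀ y ∈ F t x a, ∃ z ∈ F t x' a', dist y z ≤ γ (dist x x' + dist a a')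

end

/-! Fix a mesh bound `ε` with `η^{δ̄}_ε(T) < ∞`. Appending the single step `[t,t']`,
`t' - t ≤ ε`, to a partition of `[S,t]` gives an admissible partition of `[S,t']`, so
the supremum of `d_H(F(t',x,a), F(t,x,a))` over the tube `x̄([t,t']) + δ̄B` and `a ∈ A`
is at most `η^{δ̄}_ε(t') - η^{δ̄}_ε(t)`. The function `t ↦ η^{δ̄}_ε(t)` is monotone and
finite, hence continuous off a countable set, and at its continuity points these increments
vanish. -/

lemma ENNReal.iSup_add_le_of_forall_add_le {ι : Sort*} {f : ι → ℝ≥0∞} {c M : ℝ≥0∞}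
    (hc : c ≤ M) (h : ∀ i, f i + c ≤ M) : (⨆ i, f i) + c ≤ M := by
  cases isEmpty_or_nonempty ι
  · simpa using hc
  · rw [ENNReal.iSup_add]
    exact iSup_le h

section Variation

variable {n k : ℕ} {F : ℝ → Eucl n → Eucl k → Set (Eucl n)} {xbar : ℝ → Eucl n}
  {A : Set (Eucl k)}

noncomputable def tubeOsc (F : ℝ → Eucl n → Eucl k → Set (Eucl n)) (xbar : ℝ → Eucl n)
    (A : Set (Eucl k)) (δ s t : ℝ) : ℝ≥0∞ :=
  ⨆ x ∈ tube xbar s t δ, ⨆ a ∈ A, Metric.hausdorffEDist (F t x a) (F s x a)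

lemma variSum_eq_sum_tubeOsc (δ : ℝ) (N : ℕ) (τ : ℕ → ℝ) :
    variSum F xbar A δ N τ = ∑ i ∈ Finset.range N, tubeOsc F xbar A δ (τ i) (τ (i + 1)) :=
  rfl

def concatPartition (N : ℕ) (τ σ : ℕ → ℝ) (i : ℕ) : ℝ :=
  if i ≤ N then τ i else σ (i - N)

section Concat

variable {N M : ℕ} {τ σ : ℕ → ℝ}

lemma concatPartition_of_le {i : ℕ} (h : i ≤ N) : concatPartition N τ σ i = τ i :=
  if_pos h

lemma concatPartition_add (hjoin : τ N = σ 0) (j : ℕ) :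
    concatPartition N τ σ (N + j) = σ j := by
  rcases Nat.eq_zero_or_pos j with rfl | hj
  · exact (concatPartition_of_le le_rfl).trans hjoin
  · rw [concatPartition, if_neg (by omega), Nat.add_sub_cancel_left]

lemma forall_lt_concatPartition {P : ℝ → ℝ → Prop} (hjoin : τ N = σ 0)
    (hτ : ∀ i < N, P (τ i) (τ (i + 1))) (hσ : ∀ j < M, P (σ j) (σ (j + 1))) :
    ∀ i < N + M, P (concatPartition N τ σ i) (concatPartition N τ σ (i + 1)) := by
  intro i hi
  rcases lt_or_ge i N with h | h
  · rw [concatPartition_of_le h.le, concatPartition_of_le h]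
    exact hτ i h
  · obtain ⟨j, rfl⟩ := Nat.exists_eq_add_of_le h
    rw [add_assoc, concatPartition_add hjoin, concatPartition_add hjoin]
    exact hσ j (by omega)

lemma IsPartition.concat {a b c : ℝ} (hτ : IsPartition a b N τ) (hσ : IsPartition b c M σ) :
    IsPartition a c (N + M) (concatPartition N τ σ) := by
  obtain ⟨hN, hτ0, hτN, hτstep⟩ := hτ
  obtain ⟨-, hσ0, hσM, hσstep⟩ := hσ
  have hjoin : τ N = σ 0 := hτN.trans hσ0.symm
  refine ⟨by omega, ?_, ?_, forall_lt_concatPartition hjoin hτstep hσstep⟩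
  · rw [concatPartition_of_le (Nat.zero_le N), hτ0]
  · rw [concatPartition_add hjoin, hσM]

lemma MeshLE.concat {ε : ℝ} (hjoin : τ N = σ 0) (hτ : MeshLE N τ ε) (hσ : MeshLE M σ ε) :
    MeshLE (N + M) (concatPartition N τ σ) ε :=
  forall_lt_concatPartition (P := fun u v => v - u ≤ ε) hjoin hτ hσ

lemma variSum_concat (δ : ℝ) (hjoin : τ N = σ 0) :
    variSum F xbar A δ (N + M) (concatPartition N τ σ) =
      variSum F xbar A δ N τ + variSum F xbar A δ M σ := by
  simp only [variSum_eq_sum_tubeOsc, Finset.sum_range_add]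
  congr 1
  · refine Finset.sum_congr rfl fun i hi => ?_
    have hi : i < N := Finset.mem_range.1 hi
    rw [concatPartition_of_le hi.le, concatPartition_of_le hi]
  · refine Finset.sum_congr rfl fun j _ => ?_
    rw [add_assoc, concatPartition_add hjoin, concatPartition_add hjoin]

end Concat

lemma exists_isPartition_meshLE {a b ε : ℝ} (hab : a < b) (hε : 0 < ε) :
    ∃ N τ, IsPartition a b N τ ∧ MeshLE N τ ε := by
  set N : ℕ := ⌈(b - a) / ε⌉₊
  have hN : 0 < N := Nat.ceil_pos.2 (div_pos (sub_pos.2 hab) hε)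
  have hNR : (0 : ℝ) < N := by exact_mod_cast hN
  have hstep : 0 < (b - a) / N := div_pos (sub_pos.2 hab) hNR
  have hmesh : (b - a) / N ≤ ε := by
    rw [div_le_iff₀ hNR, ← div_le_iff₀' hε]
    exact Nat.le_ceil _
  refine ⟨N, fun i => a + i * ((b - a) / N), ⟨hN, by simp, by field_simp; ring, ?_⟩, ?_⟩
  · intro i _
    push_cast
    linarith
  · intro i _
    push_cast
    linarith

lemma variSum_le_etaE {S δ ε t : ℝ} {N : ℕ} {τ : ℕ → ℝ} (hp : IsPartition S t N τ)
    (hm : MeshLE N τ ε) : variSum F xbar A δ N τ ≤ etaE F xbar A S δ ε t :=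
  le_iSup_of_le N <| le_iSup_of_le τ <| le_iSup_of_le hp <| le_iSup_of_le hm le_rfl

lemma variSum_add_variSum_le_etaE {S δ ε t t' : ℝ} {N M : ℕ} {τ σ : ℕ → ℝ}
    (hτ : IsPartition S t N τ) (hτm : MeshLE N τ ε)
    (hσ : IsPartition t t' M σ) (hσm : MeshLE M σ ε) :
    variSum F xbar A δ N τ + variSum F xbar A δ M σ ≤ etaE F xbar A S δ ε t' := by
  have hjoin : τ N = σ 0 := hτ.2.2.1.trans hσ.2.1.symm
  rw [← variSum_concat δ hjoin]
  exact variSum_le_etaE (hτ.concat hσ) (hτm.concat hjoin hσm)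

lemma etaE_mono {S δ ε t t' : ℝ} (hε : 0 < ε) (htt' : t ≤ t') :
    etaE F xbar A S δ ε t ≤ etaE F xbar A S δ ε t' := by
  rcases htt'.eq_or_lt with rfl | hlt
  · exact le_rfl
  obtain ⟨M, σ, hσ, hσm⟩ := exists_isPartition_meshLE hlt hε
  exact iSup_le fun N => iSup_le fun τ => iSup_le fun hτ => iSup_le fun hτm =>
    le_self_add.trans (variSum_add_variSum_le_etaE hτ hτm hσ hσm)

lemma etaE_add_tubeOsc_le {S δ ε t t' : ℝ} (hε : 0 < ε) (hSt : S ≤ t) (htt' : t < t')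
    (hmesh : t' - t ≤ ε) :
    etaE F xbar A S δ ε t + tubeOsc F xbar A δ t t' ≤ etaE F xbar A S δ ε t' := by
  set σ : ℕ → ℝ := fun i => if i = 0 then t else t'
  have hσ : IsPartition t t' 1 σ :=
    ⟨one_pos, rfl, rfl, fun i hi => by simpa [σ, Nat.lt_one_iff.1 hi]⟩
  have hσm : MeshLE 1 σ ε := fun i hi => by simpa [σ, Nat.lt_one_iff.1 hi] using hmesh
  have hσv : variSum F xbar A δ 1 σ = tubeOsc F xbar A δ t t' := by
    simp [variSum_eq_sum_tubeOsc, σ]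
  have hσle : tubeOsc F xbar A δ t t' ≤ etaE F xbar A S δ ε t' := by
    rcases hSt.eq_or_lt with rfl | hlt
    · exact hσv ▸ variSum_le_etaE hσ hσm
    · obtain ⟨N, τ, hτ, hτm⟩ := exists_isPartition_meshLE hlt hε
      exact hσv ▸ le_add_self.trans (variSum_add_variSum_le_etaE hτ hτm hσ hσm)
  refine ENNReal.iSup_add_le_of_forall_add_le hσle fun N => ?_
  refine ENNReal.iSup_add_le_of_forall_add_le hσle fun τ => ?_
  refine ENNReal.iSup_add_le_of_forall_add_le hσle fun hτ => ?_
  refine ENNReal.iSup_add_le_of_forall_add_le hσle fun hτm => ?_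
  exact hσv ▸ variSum_add_variSum_le_etaE hτ hτm hσ hσm

lemma iSup_closedBall_le_tubeOsc {δ δ' r s t : ℝ} (hr : r ∈ Icc s t) (hδ : δ ≤ δ') :
    ⨆ x ∈ closedBall (xbar r) δ, ⨆ a ∈ A, Metric.hausdorffEDist (F t x a) (F s x a) ≤
      tubeOsc F xbar A δ' s t :=
  biSup_mono fun _ hx => ⟨r, hr, (mem_closedBall.1 hx).trans hδ⟩

lemma iSup_hausdorffEDist_le_max_etaE_sub {S δ δ' ε s t : ℝ} (hε : 0 < ε) (hδ : δ ≤ δ')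
    (hSs : S ≤ s) (hSt : S ≤ t) (hst : |s - t| ≤ ε)
    (hs : etaE F xbar A S δ' ε s ≠ ⊤) (ht : etaE F xbar A S δ' ε t ≠ ⊤) :
    ⨆ x ∈ closedBall (xbar t) δ, ⨆ a ∈ A, Metric.hausdorffEDist (F s x a) (F t x a) ≤
      max (etaE F xbar A S δ' ε s - etaE F xbar A S δ' ε t)
        (etaE F xbar A S δ' ε t - etaE F xbar A S δ' ε s) := by
  rcases lt_trichotomy s t with hlt | rfl | hgt
  · simp_rw [Metric.hausdorffEDist_comm (s := F s _ _) (t := F t _ _)]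
    refine (iSup_closedBall_le_tubeOsc ⟨hlt.le, le_rfl⟩ hδ).trans (le_max_of_le_right ?_)
    refine ENNReal.le_sub_of_add_le_left hs (etaE_add_tubeOsc_le hε hSs hlt ?_)
    linarith [neg_abs_le (s - t)]
  · simp [Metric.hausdorffEDist_self]
  · refine (iSup_closedBall_le_tubeOsc ⟨le_rfl, hgt.le⟩ hδ).trans (le_max_of_le_left ?_)
    refine ENNReal.le_sub_of_add_le_left ht (etaE_add_tubeOsc_le hε hSt hgt ?_)
    linarith [le_abs_self (s - t)]

end Variation

theorem stmt5_general {n k : ℕ} (S T : ℝ)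
    (A : Set (Eucl k))
    (F : ℝ → Eucl n → Eucl k → Set (Eucl n))
    (xbar : ℝ → Eucl n)
    (δbar : ℝ) (hfin : etaD F xbar A S δbar T < ⊤)
    (δ : ℝ) (hδδ : δ < δbar) :
    ∃ 𝒜 : Set ℝ, 𝒜.Countable ∧ 𝒜 ⊆ Ioo S T ∧
      ∀ t ∈ Ioo S T \ 𝒜,
        Tendsto (fun t' => ⨆ x ∈ closedBall (xbar t) δ, ⨆ a ∈ A,
            EMetric.hausdorffEdist (F t' x a) (F t x a))
          (𝓝[Icc S T] t) (𝓝 0) := by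
  obtain ⟨ε, hε, hεT⟩ : ∃ ε > 0, etaE F xbar A S δbar ε T < ⊤ := by
    simpa only [etaD, iInf_lt_iff, exists_prop] using hfin
  -- clamped at `T` so that `W` is monotone and finite on all of `ℝ`
  set W : ℝ → ℝ≥0∞ := fun s => etaE F xbar A S δbar ε (min s T)
  have hW_mono : Monotone W := fun s s' h => etaE_mono hε (min_le_min_right T h)
  have hW_fin (s : ℝ) : W s ≠ ⊤ :=
    ne_top_of_le_ne_top hεT.ne (etaE_mono hε (min_le_right s T))
  have hW_eq {s : ℝ} (hs : s ≤ T) : W s = etaE F xbar A S δbar ε s := by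
    simp only [W, min_eq_left hs]
  refine ⟨Ioo S T ∩ {s | ¬ContinuousAt W s},
    hW_mono.countable_not_continuousAt.mono inter_subset_right, inter_subset_left, ?_⟩
  rintro t ⟨ht, hWt⟩
  have hcont : ContinuousAt W t := of_not_not fun h => hWt ⟨ht, h⟩
  have hlim : Tendsto (fun t' => max (W t' - W t) (W t - W t')) (𝓝 t) (𝓝 0) := by
    have hup : Tendsto (fun t' => W t' - W t) (𝓝 t) (𝓝 (W t - W t)) :=
      ENNReal.Tendsto.sub hcont tendsto_const_nhds (.inl (hW_fin t))
    have hdown : Tendsto (fun t' => W t - W t') (𝓝 t) (𝓝 (W t - W t)) :=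
      ENNReal.Tendsto.sub tendsto_const_nhds hcont (.inl (hW_fin t))
    simpa only [tsub_self, max_self] using hup.max hdown
  refine tendsto_of_tendsto_of_tendsto_of_le_of_le' tendsto_const_nhds
    (hlim.mono_left nhdsWithin_le_nhds) (Eventually.of_forall fun _ => zero_le) ?_
  filter_upwards [self_mem_nhdsWithin, nhdsWithin_le_nhds (closedBall_mem_nhds t hε)]
    with t' ht' hdist
  rw [hW_eq ht'.2, hW_eq ht.2.le]
  exact iSup_hausdorffEDist_le_max_etaE_sub hε hδδ.le ht'.1 ht.1.le
    (by simpa [Real.dist_eq] using hdist) (hW_eq ht'.2 ▸ hW_fin t') (hW_eq ht.2.le ▸ hW_fin t)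

/-- Under (C1), (C2) and bounded variation of `F` along `x̄` uniformly
over `A`, there is a countable set `𝒜 ⊆ (S,T)` off which `t ↦ F(t,·,·)` is continuous
in Hausdorff distance, uniformly over `x ∈ x̄(t) + δB` and `a ∈ A`. -/
theorem stmt5 {n k : ℕ} (S T : ℝ) (hST : S < T)
    (A : Set (Eucl k)) (hA : IsCompact A)
    (F : ℝ → Eucl n → Eucl k → Set (Eucl n))
    (xbar : ℝ → Eucl n) (hx : ContinuousOn xbar (Icc S T))
    (hBV : eta F xbar A S T < ⊤)
    (δbar : ℝ) (hδbar : 0 < δbar) (hfin : etaD F xbar A S δbar T < ⊤)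
    (hC1 : HypC1 F xbar A S T δbar)
    (γ : ℝ → ℝ) (hC2 : HypC2 F xbar A S T δbar γ)
    (δ : ℝ) (hδ : 0 < δ) (hδδ : δ < δbar) :
    ∃ 𝒜 : Set ℝ, 𝒜.Countable ∧ 𝒜 ⊆ Ioo S T ∧
      ∀ t ∈ Ioo S T \ 𝒜,
        Tendsto (fun t' => ⨆ x ∈ closedBall (xbar t) δ, ⨆ a ∈ A,
            EMetric.hausdorffEdist (F t' x a) (F t x a))
          (𝓝[Icc S T] t) (𝓝 0) :=
  stmt5_general S T A F xbar δbar hfin δ hδδ
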